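/- If every connected component C_k of V \ S in the n-dimensional hypercube satisfies |C_k| ≤ 2^{n-1}, then |S| ≥ (1/n^2)·(2^n − |S|); consequently if |S| < 2^n/(n^2+1) some component exceeds 2^{n-1}. -/

import Mathlib

/-!
For `u ∉ S` let `C u` be its component in `V \ S`. For `v ∉ C u`, the canonical path from `u`
to `v`, which corrects the coordinates in increasing order, leaves `C u` through an edge
`w — flipAt n w k` with `flipAt n w k ∈ S`; and `(u, v)` is determined by that edge together
with the coordinates of `u` below `k` and of `v` from `k` on. There are at least
`(2^n - |S|) 2^(n-1)` such pairs `(u, v)` and at most `|S| n 2^n` such data, so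
`2^n ≤ (2n + 1)|S| ≤ (n^2 + 1)|S|`.
-/

def flipAt (n : ℕ) (s : Fin n → Bool) (i : Fin n) : Fin n → Bool :=
  Function.update s i (!(s i))

def cube (n : ℕ) : SimpleGraph (Fin n → Bool) :=
  SimpleGraph.fromRel (fun s t => ∃ i, t = flipAt n s i)

def IsCompOf (n : ℕ) (A C : Set (Fin n → Bool)) : Prop :=
  C.Nonempty ∧ C ⊆ A ∧ ((cube n).induce C).Connected ∧
    ∀ D, C ⊆ D → D ⊆ A → ((cube n).induce D).Connected → D = C

open Finset SimpleGraph

variable {n : ℕ}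

theorem flipAt_flipAt (s : Fin n → Bool) (i : Fin n) : flipAt n (flipAt n s i) i = s := by
  simp [flipAt]

theorem cube_adj_flipAt (s : Fin n → Bool) (i : Fin n) : (cube n).Adj s (flipAt n s i) := by
  refine ⟨fun h => ?_, Or.inl ⟨i, rfl⟩⟩
  simpa [flipAt] using congrFun h i

theorem update_eq_flipAt {s : Fin n → Bool} {i : Fin n} {b : Bool} (hb : b ≠ s i) :
    Function.update s i b = flipAt n s i := by
  rw [flipAt, Bool.eq_not_of_ne hb]

theorem isCompOf_iff_maximal {A C : Set (Fin n → Bool)} :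
    IsCompOf n A C ↔ Maximal (fun D => D ⊆ A ∧ ((cube n).induce D).Connected) C := by
  constructor
  · rintro ⟨-, hCA, hconn, hmax⟩
    exact ⟨⟨hCA, hconn⟩, fun D ⟨hDA, hD⟩ hCD => (hmax D hCD hDA hD).le⟩
  · rintro ⟨⟨hCA, hconn⟩, hmax⟩
    exact ⟨Set.nonempty_coe_sort.mp hconn.nonempty, hCA, hconn,
      fun D hCD hDA hD => (hmax ⟨hDA, hD⟩ hCD).antisymm hCD⟩

theorem exists_isCompOf_mem {A : Set (Fin n → Bool)} {u : Fin n → Bool} (hu : u ∈ A) :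
    ∃ C, IsCompOf n A C ∧ u ∈ C := by
  obtain ⟨C, huC, hC⟩ := Finite.exists_le_maximal
    (p := fun D => D ⊆ A ∧ ((cube n).induce D).Connected) (a := {u})
    ⟨Set.singleton_subset_iff.mpr hu, by simp [connected_top]⟩
  exact ⟨C, isCompOf_iff_maximal.mpr hC, huC rfl⟩

theorem IsCompOf.mem_of_adj {A C : Set (Fin n → Bool)} (hC : IsCompOf n A C)
    {w w' : Fin n → Bool} (hw : w ∈ C) (hadj : (cube n).Adj w w') (hw' : w' ∈ A) : w' ∈ C := by
  obtain ⟨⟨hCA, hconn⟩, hmax⟩ := isCompOf_iff_maximal.mp hC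
  have hconn' : ((cube n).induce (C ∪ {w'})).Connected :=
    connected_induce_union hconn.preconnected (by simp [preconnected_top]) hw rfl hadj
  exact hmax ⟨Set.union_subset hCA (Set.singleton_subset_iff.mpr hw'), hconn'⟩
    Set.subset_union_left (Or.inr rfl)

/-- As `k` runs from `0` to `n`, `splice k x y` walks along the canonical path from `y` to `x`. -/
def splice (k : ℕ) (x y : Fin n → Bool) : Fin n → Bool :=
  fun j => if (j : ℕ) < k then x j else y j

theorem splice_zero (x y : Fin n → Bool) : splice 0 x y = y := by
  funext j
  simp [splice]

theorem splice_of_le {k : ℕ} (hk : n ≤ k) (x y : Fin n → Bool) : splice k x y = x := by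
  funext j
  simp [splice, j.isLt.trans_le hk]

theorem splice_succ (k : Fin n) (x y : Fin n → Bool) :
    splice (k + 1) x y = Function.update (splice k x y) k (x k) := by
  funext j
  rcases lt_trichotomy j k with h | rfl | h
  · have h' : (j : ℕ) < k := h
    simp [splice, h.ne, h', h'.trans (Nat.lt_succ_self _)]
  · simp [splice]
  · simp [splice, h.ne', not_le.mpr h, not_lt.mpr h.le]

theorem splice_splice_splice (k : ℕ) (x y : Fin n → Bool) :
    splice k (splice k x y) (splice k y x) = x := by
  funext j
  by_cases h : (j : ℕ) < k <;> simp [splice, h]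

theorem exists_splice_mem_not_mem {C : Set (Fin n → Bool)} {x y : Fin n → Bool}
    (hy : y ∈ C) (hx : x ∉ C) :
    ∃ k : Fin n, splice k x y ∈ C ∧ splice (k + 1) x y ∉ C := by
  suffices ∀ m ≤ n, splice m x y ∉ C → ∃ k : Fin n, splice k x y ∈ C ∧ splice (k + 1) x y ∉ C
    from this n le_rfl (by rwa [splice_of_le le_rfl])
  intro m
  induction m with
  | zero => exact fun _ h => absurd (by rwa [splice_zero]) h
  | succ m ih =>
    intro hm h
    by_cases hmC : splice m x y ∈ C
    · exact ⟨⟨m, hm⟩, hmC, h⟩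
    · exact ih (by omega) hmC

/-- The endpoints `(u, v)` of the canonical path that crosses from `flipAt n s k` to `s` at step
`k`, where `g` supplies the coordinates of `u` below `k` and those of `v` from `k` on. -/
def crossingEnds (q : (Fin n → Bool) × Fin n × (Fin n → Bool)) :
    (Fin n → Bool) × (Fin n → Bool) :=
  (splice q.2.1 q.2.2 (flipAt n q.1 q.2.1), splice q.2.1 (flipAt n q.1 q.2.1) q.2.2)

theorem IsCompOf.exists_crossingEnds_eq {S C : Set (Fin n → Bool)} (hC : IsCompOf n Sᶜ C)
    {u v : Fin n → Bool} (hu : u ∈ C) (hv : v ∉ C) :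
    ∃ s ∈ S, ∃ k g, crossingEnds (s, k, g) = (u, v) := by
  obtain ⟨k, hw, hs⟩ := exists_splice_mem_not_mem hu hv
  set w := splice k v u
  have hvk : v k ≠ w k := by
    intro hvk
    rw [splice_succ, hvk, Function.update_eq_self] at hs
    exact hs hw
  have hflip : splice (k + 1) v u = flipAt n w k := by
    rw [splice_succ, update_eq_flipAt hvk]
  have hsS : splice (k + 1) v u ∈ S := by
    by_contra hsS
    exact hs (hC.mem_of_adj hw (hflip ▸ cube_adj_flipAt w k) hsS)
  refine ⟨_, hsS, k, splice k u v, ?_⟩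
  rw [crossingEnds, hflip, flipAt_flipAt, splice_splice_splice, splice_splice_splice]

theorem sum_ncard_compl_le (T : Finset (Fin n → Bool)) (C : (Fin n → Bool) → Set (Fin n → Bool))
    (hC : ∀ u ∉ T, IsCompOf n (↑T)ᶜ (C u) ∧ u ∈ C u) :
    ∑ u ∈ Tᶜ, (C u)ᶜ.ncard ≤ #T * (n * 2 ^ n) := by
  classical
  calc ∑ u ∈ Tᶜ, (C u)ᶜ.ncard = #(Tᶜ.sigma fun u => (C u)ᶜ.toFinset) := by
        simp [card_sigma, Set.ncard_eq_toFinset_card']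
    _ ≤ #(T ×ˢ univ ×ˢ univ) :=
        card_le_card_of_surjOn (fun q => ⟨(crossingEnds q).1, (crossingEnds q).2⟩) ?_
    _ = #T * (n * 2 ^ n) := by simp
  rintro ⟨u, v⟩ huv
  simp only [coe_sigma, Set.mem_sigma_iff, coe_compl, Set.mem_compl_iff, mem_coe,
    Set.coe_toFinset] at huv
  obtain ⟨s, hs, k, g, hq⟩ := (hC u huv.1).1.exists_crossingEnds_eq (hC u huv.1).2 huv.2
  exact ⟨(s, k, g), by simpa using hs, by simp [hq]⟩

theorem two_pow_le_mul_ncard {S : Set (Fin n → Bool)}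
    (h : ∀ C, IsCompOf n Sᶜ C → 2 * C.ncard ≤ 2 ^ n) :
    2 ^ n ≤ (2 * n + 1) * S.ncard := by
  obtain ⟨T, rfl⟩ := S.toFinite.exists_finset_coe
  choose! C hC using fun u (hu : u ∉ T) => exists_isCompOf_mem (A := (↑T)ᶜ) (u := u) hu
  have hcompl : ∀ u ∈ Tᶜ, 2 ^ n ≤ 2 * (C u)ᶜ.ncard := by
    intro u hu
    have hcard : (C u).ncard + (C u)ᶜ.ncard = 2 ^ n := by rw [Set.ncard_add_ncard_compl]; simp
    have := h _ (hC u (mem_compl.mp hu)).1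
    omega
  have hsum : 2 ^ n * #Tᶜ ≤ 2 * (#T * (n * 2 ^ n)) :=
    calc 2 ^ n * #Tᶜ = ∑ u ∈ Tᶜ, 2 ^ n := by rw [sum_const, smul_eq_mul, mul_comm]
      _ ≤ ∑ u ∈ Tᶜ, 2 * (C u)ᶜ.ncard := sum_le_sum hcompl
      _ ≤ 2 * (#T * (n * 2 ^ n)) := by
        rw [← mul_sum]
        exact Nat.mul_le_mul_left 2 (sum_ncard_compl_le T C hC)
  have hT : #Tᶜ + #T = 2 ^ n := by simp [card_compl_add_card]
  have hTc : #Tᶜ ≤ 2 * n * #T :=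
    Nat.le_of_mul_le_mul_left (by linarith) (by positivity : 0 < 2 ^ n)
  rw [Set.ncard_coe_finset]
  linarith

theorem two_pow_le_sq_add_one_mul {m : ℕ} (h : 2 ^ n ≤ (2 * n + 1) * m) :
    2 ^ n ≤ (n ^ 2 + 1) * m := by
  rcases n with _ | _ | n
  · simpa using h
  · omega
  · exact h.trans (Nat.mul_le_mul_right m (by nlinarith))

/-- If every connected component of `V \ S` has at most `2^{n-1}` vertices, then
`|S| ≥ (1/n²)(2^n − |S|)`; consequently if `|S| < 2^n/(n²+1)` then some component
of `V \ S` has more than `2^{n-1}` vertices. -/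
theorem stmt2 (n : ℕ) (S : Set (Fin n → Bool))
    (h : ∀ C : Set (Fin n → Bool), IsCompOf n Sᶜ C → (C.ncard : ℝ) ≤ 2 ^ n / 2) :
    (S.ncard : ℝ) ≥ (1 / n ^ 2) * (2 ^ n - S.ncard) ∧
      ((S.ncard : ℝ) < 2 ^ n / (n ^ 2 + 1) →
        ∃ C : Set (Fin n → Bool), IsCompOf n Sᶜ C ∧ (C.ncard : ℝ) > 2 ^ n / 2) := by
  have hcomp : ∀ C, IsCompOf n Sᶜ C → 2 * C.ncard ≤ 2 ^ n := fun C hC => by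
    have hC' := h C hC
    rw [le_div_iff₀ two_pos] at hC'
    exact_mod_cast (by push_cast; linarith : ((2 * C.ncard : ℕ) : ℝ) ≤ 2 ^ n)
  have hS : (2 : ℝ) ^ n ≤ (n ^ 2 + 1) * S.ncard := by
    exact_mod_cast two_pow_le_sq_add_one_mul (two_pow_le_mul_ncard hcomp)
  refine ⟨?_, fun hlt => absurd hS ?_⟩
  · rcases eq_or_ne n 0 with rfl | hn
    · simp
    · rw [ge_iff_le, one_div_mul_eq_div, div_le_iff₀ (by positivity)]
      linarith
  · rw [lt_div_iff₀ (by positivity)] at hlt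
    linarith
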